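/- arXiv:cs/0505076 — 7 statements merged into one kernel-verified Lean document; each statement's English description precedes it below -/
import Mathlib

section
/- Assume G1 is connected and every vertex of G2 has degree at most d0. Then G1 and G2 are isomorphic if and only if there exists a vertex τ ∈ V2 of degree d0 in G2 such that σ0 and τ are automorphism equivalent in the graph G_τ. -/
attribute [local instance] Classical.propDecidable

/-- The graph `G_τ` on the vertex set `V₁ ⊕ V₂` (disjoint union) whose edge set is
`E₁ ∪ E₂ ∪ {{σ₀, τ}}`. -/
def GraphTau {V₁ V₂ : Type*} (G₁ : SimpleGraph V₁) (G₂ : SimpleGraph V₂)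
    (σ₀ : V₁) (τ : V₂) : SimpleGraph (V₁ ⊕ V₂) where
  Adj u v :=
    match u, v with
    | Sum.inl a, Sum.inl b => G₁.Adj a b
    | Sum.inr a, Sum.inr b => G₂.Adj a b
    | Sum.inl a, Sum.inr b => a = σ₀ ∧ b = τ
    | Sum.inr a, Sum.inl b => b = σ₀ ∧ a = τ
  symm := ⟨by
    rintro (a | a) (b | b) hab
    · exact G₁.adj_symm hab
    · exact hab
    · exact hab
    · exact G₂.adj_symm hab⟩
  loopless := ⟨by
    rintro (a | a) hab
    · exact G₁.ne_of_adj hab rfl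
    · exact G₂.ne_of_adj hab rfl⟩

/-!
An isomorphism `f : G₁ ≃g G₂` yields the automorphism of `G_{f σ₀}` exchanging the two halves
along `f`. Conversely, an automorphism `π` of `G_τ` with `π σ₀ = τ` cannot move a vertex of `V₁`
back into `V₁` along an edge of `G₁`, so by connectedness it maps all of `V₁` into `V₂`; as
`|V₁| = |V₂|`, it restricts to an isomorphism `G₁ ≃g G₂`.
-/

open Sum

namespace SimpleGraph

variable {V : Type*} {G : SimpleGraph V}

lemma Reachable.of_adj_imp {p : V → Prop} {u v : V} (h : G.Reachable u v)
    (hp : ∀ x y, G.Adj x y → p x → p y) (hu : p u) : p v := by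
  obtain ⟨w⟩ := h
  induction w with
  | nil => exact hu
  | cons hxy _ ih => exact ih (hp _ _ hxy hu)

end SimpleGraph

namespace GraphTau

variable {V₁ V₂ : Type*} {G₁ : SimpleGraph V₁} {G₂ : SimpleGraph V₂} {σ₀ : V₁} {τ : V₂}

@[simp] lemma adj_inl_inl {a b : V₁} :
    (GraphTau G₁ G₂ σ₀ τ).Adj (inl a) (inl b) ↔ G₁.Adj a b := Iff.rfl

@[simp] lemma adj_inr_inr {a b : V₂} :
    (GraphTau G₁ G₂ σ₀ τ).Adj (inr a) (inr b) ↔ G₂.Adj a b := Iff.rfl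

@[simp] lemma adj_inl_inr {a : V₁} {b : V₂} :
    (GraphTau G₁ G₂ σ₀ τ).Adj (inl a) (inr b) ↔ a = σ₀ ∧ b = τ := Iff.rfl

@[simp] lemma adj_inr_inl {a : V₂} {b : V₁} :
    (GraphTau G₁ G₂ σ₀ τ).Adj (inr a) (inl b) ↔ b = σ₀ ∧ a = τ := Iff.rfl

def swap (f : G₁ ≃g G₂) (σ₀ : V₁) : GraphTau G₁ G₂ σ₀ (f σ₀) ≃g GraphTau G₁ G₂ σ₀ (f σ₀) where
  toEquiv := (Equiv.sumCongr f.toEquiv f.symm.toEquiv).trans (Equiv.sumComm V₂ V₁)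
  map_rel_iff' := by
    rintro (a | a) (b | b)
    · exact f.map_adj_iff
    · simp [f.symm_apply_eq, and_comm]
    · simp [f.symm_apply_eq, and_comm]
    · exact f.symm.map_adj_iff

variable [Fintype V₁] [Fintype V₂]

lemma neighborFinset_inl (v : V₁) :
    (GraphTau G₁ G₂ σ₀ τ).neighborFinset (inl v) =
      (G₁.neighborFinset v).disjSum (if v = σ₀ then {τ} else ∅) := by
  ext (b | b)
  · simp
  · split_ifs <;> simp [*]

lemma degree_inl (v : V₁) :
    (GraphTau G₁ G₂ σ₀ τ).degree (inl v) = G₁.degree v + if v = σ₀ then 1 else 0 := by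
  rw [← SimpleGraph.card_neighborFinset_eq_degree, neighborFinset_inl, Finset.card_disjSum,
    SimpleGraph.card_neighborFinset_eq_degree]
  split_ifs <;> rfl

/-- An edge of `G₁` whose image starts in `V₂` cannot end in `V₁`: the only edge between the
halves is the bridge, and `inl σ₀`, the only vertex of `V₁` of degree `G₁.degree σ₀ + 1`,
is already the image of `inl σ₀` itself. -/
lemma exists_map_inl_eq_inr_of_adj (hmax : ∀ v, G₁.degree v ≤ G₁.degree σ₀)
    {π : GraphTau G₁ G₂ σ₀ τ ≃g GraphTau G₁ G₂ σ₀ τ} (hπ : π (inl σ₀) = inr τ) {x y : V₁}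
    (hxy : G₁.Adj x y) (hx : ∃ b, π (inl x) = inr b) : ∃ b, π (inl y) = inr b := by
  obtain ⟨b, hb⟩ := hx
  rcases hy : π (inl y) with c | c
  · have hadj : (GraphTau G₁ G₂ σ₀ τ).Adj (π (inl x)) (π (inl y)) := π.map_adj_iff.2 hxy
    rw [hb, hy, adj_inr_inl] at hadj
    have hyσ₀ : y ≠ σ₀ := by
      rintro rfl
      rw [hπ] at hy
      exact inr_ne_inl hy
    have hdeg := π.degree_eq (inl y)
    rw [hy, hadj.1, degree_inl, degree_inl, if_pos rfl, if_neg hyσ₀] at hdeg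
    have := hmax y
    omega
  · exact ⟨c, rfl⟩

lemma nonempty_iso_of_forall_exists_map_inl_eq_inr
    (hcard : Fintype.card V₁ = Fintype.card V₂) (π : GraphTau G₁ G₂ σ₀ τ ≃g GraphTau G₁ G₂ σ₀ τ)
    (h : ∀ a, ∃ b, π (inl a) = inr b) : Nonempty (G₁ ≃g G₂) := by
  choose g hg using h
  have hinj : Function.Injective g := fun a a' hgaa' =>
    inl_injective (π.injective (by rw [hg, hg, hgaa']))
  have hbij : Function.Bijective g :=
    (Fintype.bijective_iff_injective_and_card g).2 ⟨hinj, hcard⟩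
  refine ⟨⟨Equiv.ofBijective g hbij, fun {a b} => ?_⟩⟩
  simpa only [Equiv.ofBijective_apply, hg, adj_inr_inr, adj_inl_inl] using
    π.map_adj_iff (v := inl a) (w := inl b)

end GraphTau

theorem isomorphic_iff_exists_automorphism_equivalent_general
    {V₁ V₂ : Type*} [Fintype V₁] [Fintype V₂]
    (G₁ : SimpleGraph V₁) (G₂ : SimpleGraph V₂)
    (n : ℕ) (hcard₁ : Fintype.card V₁ = n) (hcard₂ : Fintype.card V₂ = n)
    (σ₀ : V₁) (d₀ : ℕ) (hσ₀ : G₁.degree σ₀ = d₀) (hmax : ∀ v : V₁, G₁.degree v ≤ d₀)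
    (hconn : G₁.Connected) :
    Nonempty (G₁ ≃g G₂) ↔
      ∃ τ : V₂, G₂.degree τ = d₀ ∧
        ∃ π : GraphTau G₁ G₂ σ₀ τ ≃g GraphTau G₁ G₂ σ₀ τ,
          π (Sum.inl σ₀) = Sum.inr τ := by
  constructor
  · rintro ⟨f⟩
    exact ⟨f σ₀, by rw [f.degree_eq, hσ₀], GraphTau.swap f σ₀, rfl⟩
  · rintro ⟨τ, -, π, hπ⟩
    subst hσ₀
    refine GraphTau.nonempty_iso_of_forall_exists_map_inl_eq_inr (hcard₁.trans hcard₂.symm) π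
      fun a => ?_
    exact (hconn.preconnected σ₀ a).of_adj_imp
      (fun _ _ hxy hx => GraphTau.exists_map_inl_eq_inr_of_adj hmax hπ hxy hx) ⟨τ, hπ⟩

/-- Let `G₁, G₂` be graphs on disjoint vertex sets of the same cardinality `n > 1`, let `σ₀`
be a vertex of maximal degree `d₀` in `G₁`, assume `G₁` is connected and every vertex of `G₂`
has degree at most `d₀`. Then `G₁` and `G₂` are isomorphic if and only if there is a vertex
`τ` of degree `d₀` in `G₂` such that `σ₀` and `τ` are automorphism equivalent in `G_τ`. -/
theorem isomorphic_iff_exists_automorphism_equivalent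
    {V₁ V₂ : Type*} [Fintype V₁] [Fintype V₂]
    (G₁ : SimpleGraph V₁) (G₂ : SimpleGraph V₂)
    (n : ℕ) (hn : 1 < n) (hcard₁ : Fintype.card V₁ = n) (hcard₂ : Fintype.card V₂ = n)
    (σ₀ : V₁) (d₀ : ℕ) (hσ₀ : G₁.degree σ₀ = d₀) (hmax : ∀ v : V₁, G₁.degree v ≤ d₀)
    (hconn : G₁.Connected) (hdeg₂ : ∀ v : V₂, G₂.degree v ≤ d₀) :
    Nonempty (G₁ ≃g G₂) ↔
      ∃ τ : V₂, G₂.degree τ = d₀ ∧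
        ∃ π : GraphTau G₁ G₂ σ₀ τ ≃g GraphTau G₁ G₂ σ₀ τ,
          π (Sum.inl σ₀) = Sum.inr τ :=
  isomorphic_iff_exists_automorphism_equivalent_general G₁ G₂ n hcard₁ hcard₂ σ₀ d₀ hσ₀ hmax hconn
end

section
/- If t ↦ X(t) is a solution of the system on an interval J ⊆ ℝ, then the total energy E_k(X′(t)) + E_p(X(t)) is constant on J: for all t, t' ∈ J, E_k(X′(t)) + E_p(X(t)) = E_k(X′(t')) + E_p(X(t')). -/
/-! Pairing `x_i″ = F_i(X)` with `x_i′` and summing over `i`, the derivative of the kinetic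
energy is the power `∑_i ⟪x_i′, F_i(X)⟫` of the forces. Since `h` is symmetric, this sum
regroups over unordered pairs `r < s` into
`∑_{r<s} (1/‖x_r − x_s‖² − h_{rs}) ⟪x_r − x_s, x_r′ − x_s′⟫`, which is exactly `−(d/dt) E_p(X)`.
So the total energy has zero derivative on the interval `J`, hence is constant there. -/

/-- The force acting on the `i`-th point of a configuration `X` of `m` points of `ℝ^m`,
for the adjacency matrix `h`:  `F_i(X) = ∑_{k ≠ i} (x_i − x_k)·(1/‖x_i − x_k‖² − h_{ik})`. -/
noncomputable def force (m : ℕ) (h : Matrix (Fin m) (Fin m) ℝ)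
    (X : Fin m → EuclideanSpace ℝ (Fin m)) (i : Fin m) : EuclideanSpace ℝ (Fin m) :=
  ∑ k ∈ Finset.univ.filter (fun k => k ≠ i), (1 / ‖X i - X k‖ ^ 2 - h i k) • (X i - X k)

/-- `X : ℝ → (ℝ^m)^m` is a solution of the system `x_i″ = F_i(X)` on the set `S ⊆ ℝ`:
its points are pairwise distinct at every `t ∈ S`, it is differentiable at every `t ∈ S`,
and its velocity `deriv` has derivative `F_i(X(t))` at every `t ∈ S`. -/
def IsSolution (m : ℕ) (h : Matrix (Fin m) (Fin m) ℝ) (S : Set ℝ)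
    (X : ℝ → Fin m → EuclideanSpace ℝ (Fin m)) : Prop :=
  (∀ t ∈ S, ∀ i k : Fin m, i ≠ k → X t i ≠ X t k) ∧
  (∀ i : Fin m, ∀ t ∈ S, DifferentiableAt ℝ (fun s => X s i) t) ∧
  (∀ i : Fin m, ∀ t ∈ S, HasDerivAt (deriv (fun s => X s i)) (force m h (X t) i) t)

/-- Kinetic energy of a tuple of velocities: `E_k(Y) = (1/2) ∑_r ‖y_r‖²`. -/
noncomputable def kineticEnergy (m : ℕ) (Y : Fin m → EuclideanSpace ℝ (Fin m)) : ℝ :=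
  (1 / 2) * ∑ r, ‖Y r‖ ^ 2

/-- Potential energy of a configuration:
`E_p(X) = −(1/2) ∑_{r<s} (log ‖x_r − x_s‖² − h_{rs}‖x_r − x_s‖²)`. -/
noncomputable def potentialEnergy (m : ℕ) (h : Matrix (Fin m) (Fin m) ℝ)
    (X : Fin m → EuclideanSpace ℝ (Fin m)) : ℝ :=
  -(1 / 2) * ∑ p ∈ Finset.univ.filter (fun p : Fin m × Fin m => p.1 < p.2),
      (Real.log (‖X p.1 - X p.2‖ ^ 2) - h p.1 p.2 * ‖X p.1 - X p.2‖ ^ 2)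

open scoped RealInnerProductSpace

open Finset

lemma sum_sum_ne_eq_sum_lt {ι M : Type*} [Fintype ι] [LinearOrder ι] [AddCommMonoid M]
    (f : ι → ι → M) :
    ∑ r, ∑ k ∈ univ.filter (· ≠ r), f r k =
      ∑ p ∈ univ.filter (fun p : ι × ι => p.1 < p.2), (f p.1 p.2 + f p.2 p.1) := by
  have hswap : ∑ p ∈ univ.filter (fun p : ι × ι => p.1 < p.2), f p.2 p.1 =
      ∑ p ∈ univ.filter (fun p : ι × ι => p.2 < p.1), f p.1 p.2 :=
    sum_equiv (Equiv.prodComm ι ι) (by simp) (by simp)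
  have hsplit : univ.filter (fun p : ι × ι => p.2 ≠ p.1) =
      univ.filter (fun p : ι × ι => p.1 < p.2) ∪ univ.filter (fun p : ι × ι => p.2 < p.1) := by
    ext p
    simp only [mem_filter, mem_univ, true_and, mem_union]
    exact ne_comm.trans lt_or_lt_iff_ne.symm
  rw [sum_add_distrib, hswap, ← sum_union (disjoint_filter.2 fun p _ h => h.not_gt), ← hsplit,
    sum_filter, Fintype.sum_prod_type]
  simp [sum_filter]

lemma HasDerivAt.log_norm_sq_sub_mul_norm_sq {E : Type*} [NormedAddCommGroup E]
    [InnerProductSpace ℝ E] {u : ℝ → E} {u' : E} {t : ℝ} (c : ℝ) (hu : HasDerivAt u u' t)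
    (ht : u t ≠ 0) :
    HasDerivAt (fun s => Real.log (‖u s‖ ^ 2) - c * ‖u s‖ ^ 2)
      (2 * ((1 / ‖u t‖ ^ 2 - c) * ⟪u t, u'⟫)) t := by
  have hnorm : ‖u t‖ ^ 2 ≠ 0 := by positivity
  exact ((hu.norm_sq.log hnorm).fun_sub (hu.norm_sq.const_mul c)).congr_deriv (by ring)

noncomputable def forcePower (m : ℕ) (h : Matrix (Fin m) (Fin m) ℝ)
    (X V : Fin m → EuclideanSpace ℝ (Fin m)) : ℝ :=
  ∑ p ∈ univ.filter (fun p : Fin m × Fin m => p.1 < p.2),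
    (1 / ‖X p.1 - X p.2‖ ^ 2 - h p.1 p.2) * ⟪X p.1 - X p.2, V p.1 - V p.2⟫

section Energy

variable {m : ℕ} {h : Matrix (Fin m) (Fin m) ℝ}

lemma sum_inner_force (hsymm : ∀ i k, h i k = h k i) (X V : Fin m → EuclideanSpace ℝ (Fin m)) :
    ∑ i, ⟪V i, force m h X i⟫ = forcePower m h X V := by
  have hterm : ∀ i, ⟪V i, force m h X i⟫ = ∑ k ∈ univ.filter (· ≠ i),
      (1 / ‖X i - X k‖ ^ 2 - h i k) * ⟪X i - X k, V i⟫ := fun i => by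
    simp only [force, inner_sum, real_inner_smul_right, real_inner_comm (V i)]
  simp_rw [hterm, sum_sum_ne_eq_sum_lt, forcePower]
  refine sum_congr rfl fun p _ => ?_
  rw [norm_sub_rev (X p.2), hsymm p.2, ← neg_sub (X p.1), inner_neg_left, inner_sub_right]
  ring

lemma hasDerivAt_kineticEnergy {V : ℝ → Fin m → EuclideanSpace ℝ (Fin m)}
    {A : Fin m → EuclideanSpace ℝ (Fin m)} {t : ℝ}
    (hV : ∀ i, HasDerivAt (fun s => V s i) (A i) t) :
    HasDerivAt (fun s => kineticEnergy m (V s)) (∑ i, ⟪V t i, A i⟫) t :=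
  ((HasDerivAt.fun_sum (u := univ) fun i _ => (hV i).norm_sq).const_mul (1 / 2 : ℝ)).congr_deriv
    (by rw [← mul_sum]; ring)

lemma hasDerivAt_potentialEnergy {X : ℝ → Fin m → EuclideanSpace ℝ (Fin m)}
    {V : Fin m → EuclideanSpace ℝ (Fin m)} {t : ℝ}
    (hX : ∀ i, HasDerivAt (fun s => X s i) (V i) t) (hdist : ∀ i k, i ≠ k → X t i ≠ X t k) :
    HasDerivAt (fun s => potentialEnergy m h (X s)) (-forcePower m h (X t) V) t := by
  have hpair : ∀ p ∈ univ.filter (fun p : Fin m × Fin m => p.1 < p.2),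
      HasDerivAt
        (fun s => Real.log (‖X s p.1 - X s p.2‖ ^ 2) - h p.1 p.2 * ‖X s p.1 - X s p.2‖ ^ 2)
        (2 * ((1 / ‖X t p.1 - X t p.2‖ ^ 2 - h p.1 p.2) * ⟪X t p.1 - X t p.2, V p.1 - V p.2⟫))
        t :=
    fun p hp => ((hX p.1).sub (hX p.2)).log_norm_sq_sub_mul_norm_sq _
      (sub_ne_zero.2 (hdist _ _ (mem_filter.1 hp).2.ne))
  exact ((HasDerivAt.fun_sum hpair).const_mul _).congr_deriv
    (by rw [forcePower, ← mul_sum]; ring)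

lemma IsSolution.hasDerivAt_energy (hsymm : ∀ i k, h i k = h k i) {S : Set ℝ}
    {X : ℝ → Fin m → EuclideanSpace ℝ (Fin m)} (hX : IsSolution m h S X) {t : ℝ} (ht : t ∈ S) :
    HasDerivAt (fun s => kineticEnergy m (fun i => deriv (fun u => X u i) s) +
      potentialEnergy m h (X s)) 0 t := by
  obtain ⟨hdist, hdiff, hforce⟩ := hX
  have hK := hasDerivAt_kineticEnergy (V := fun s i => deriv (fun u => X u i) s) (hforce · t ht)
  have hP := hasDerivAt_potentialEnergy (h := h) (fun i => (hdiff i t ht).hasDerivAt) (hdist t ht)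
  rw [sum_inner_force hsymm] at hK
  exact (hK.fun_add hP).congr_deriv (add_neg_cancel _)

end Energy

theorem energy_conservation_general (m : ℕ) (h : Matrix (Fin m) (Fin m) ℝ)
    (hsymm : ∀ i k, h i k = h k i)
    (J : Set ℝ) (hJ : J.OrdConnected)
    (X : ℝ → Fin m → EuclideanSpace ℝ (Fin m)) (hX : IsSolution m h J X) :
    ∀ t ∈ J, ∀ t' ∈ J,
      kineticEnergy m (fun i => deriv (fun s => X s i) t) + potentialEnergy m h (X t) =
        kineticEnergy m (fun i => deriv (fun s => X s i) t') + potentialEnergy m h (X t') := by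
  intro t ht t' ht'
  have hbound := (convex_iff_ordConnected.2 hJ).norm_image_sub_le_of_norm_hasDerivWithin_le
    (fun s hs => (hX.hasDerivAt_energy hsymm hs).hasDerivWithinAt) (fun _ _ => norm_zero.le)
    ht' ht
  rwa [zero_mul, norm_le_zero_iff, sub_eq_zero] at hbound

/-- Energy conservation: along a solution of the system on an interval `J ⊆ ℝ`, the total
energy `E_k(X′(t)) + E_p(X(t))` is constant. -/
theorem energy_conservation (m : ℕ) (hm : 2 ≤ m) (h : Matrix (Fin m) (Fin m) ℝ)
    (hsymm : ∀ i k, h i k = h k i) (hdiag : ∀ i, h i i = 0)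
    (h01 : ∀ i k, h i k = 0 ∨ h i k = 1)
    (J : Set ℝ) (hJ : J.OrdConnected)
    (X : ℝ → Fin m → EuclideanSpace ℝ (Fin m)) (hX : IsSolution m h J X) :
    ∀ t ∈ J, ∀ t' ∈ J,
      kineticEnergy m (fun i => deriv (fun s => X s i) t) + potentialEnergy m h (X t) =
        kineticEnergy m (fun i => deriv (fun s => X s i) t') + potentialEnergy m h (X t') :=
  energy_conservation_general m h hsymm J hJ X hX
end

section
/- The system is Hamiltonian: the potential energy E_p is differentiable at every configuration X with pairwise distinct points, and for each index i and each coordinate j the partial derivative of E_p with respect to the j-th coordinate of the i-th point equals −(F_i(X))_j, i.e. the force is the negative gradient of the potential energy. -/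
/-! Each pair term `log ‖v‖² − c‖v‖²` has derivative `2 (1/‖v‖² − c) ⟪v, ·⟫` at `v ≠ 0`, so the
derivative of `E_p` in a direction `u` is `−∑_{r<s} w_{rs} ⟪x_r − x_s, u_r − u_s⟫` with
`w_{rs} = 1/‖x_r − x_s‖² − h_{rs}`. Splitting each pair term into its `u_r`- and `u_s`-parts and
using the symmetry of `h` regroups this sum as `−∑_i ⟪F_i(X), u_i⟫`. -/

open Finset
open scoped RealInnerProductSpace

theorem sum_filter_lt_add_swap {ι M : Type*} [LinearOrder ι] [Fintype ι] [AddCommMonoid M]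
    (G : ι → ι → M) :
    ∑ p ∈ univ.filter (fun p : ι × ι => p.1 < p.2), (G p.1 p.2 + G p.2 p.1) =
      ∑ r, ∑ s ∈ univ.filter (· ≠ r), G r s := by
  have swap_lt : ∑ p ∈ univ.filter (fun p : ι × ι => p.1 < p.2), G p.2 p.1 =
      ∑ p ∈ univ.filter (fun p : ι × ι => p.2 < p.1), G p.1 p.2 :=
    sum_nbij' Prod.swap Prod.swap (by simp) (by simp) (by simp) (by simp) (by simp)
  have off_diag : ∑ r, ∑ s ∈ univ.filter (· ≠ r), G r s =
      ∑ p ∈ univ.filter (fun p : ι × ι => p.1 ≠ p.2), G p.1 p.2 :=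
    (sum_finset_product' _ _ _ (by simp [eq_comm])).symm
  rw [sum_add_distrib, swap_lt, off_diag,
    ← sum_filter_add_sum_filter_not (univ.filter fun p : ι × ι => p.1 ≠ p.2) (fun p => p.1 < p.2),
    filter_filter, filter_filter]
  congr 1 <;> refine sum_congr ?_ fun _ _ => rfl <;> ext p <;>
    simp only [mem_filter, mem_univ, true_and] <;> grind

theorem hasFDerivAt_log_sq_norm_sub_mul_sq_norm {E : Type*} [NormedAddCommGroup E]
    [InnerProductSpace ℝ E] (c : ℝ) {v : E} (hv : v ≠ 0) :
    HasFDerivAt (fun w : E => Real.log (‖w‖ ^ 2) - c * ‖w‖ ^ 2)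
      ((2 * (1 / ‖v‖ ^ 2 - c)) • innerSL ℝ v) v := by
  have hsq := (hasFDerivAt_id v).norm_sq
  have hlog := (Real.hasDerivAt_log (by positivity : ‖v‖ ^ 2 ≠ 0)).comp_hasFDerivAt v hsq
  refine (hlog.sub (hsq.const_mul c)).congr_fderiv ?_
  ext w
  simp
  ring

section
variable {m : ℕ} {h : Matrix (Fin m) (Fin m) ℝ} {X : Fin m → EuclideanSpace ℝ (Fin m)}

theorem sum_inner_force_s7 (hsymm : ∀ i k, h i k = h k i) (u : Fin m → EuclideanSpace ℝ (Fin m)) :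
    ∑ i, ⟪force m h X i, u i⟫ =
      ∑ p ∈ univ.filter (fun p : Fin m × Fin m => p.1 < p.2),
        (1 / ‖X p.1 - X p.2‖ ^ 2 - h p.1 p.2) * ⟪X p.1 - X p.2, u p.1 - u p.2⟫ := by
  simp only [force, sum_inner, real_inner_smul_left]
  rw [← sum_filter_lt_add_swap]
  refine sum_congr rfl fun p _ => ?_
  rw [norm_sub_rev (X p.2), hsymm p.2, inner_sub_right, ← neg_sub (X p.1), inner_neg_left]
  ring

theorem hasFDerivAt_potentialEnergy (hsymm : ∀ i k, h i k = h k i)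
    (hX : ∀ i k : Fin m, i ≠ k → X i ≠ X k) :
    HasFDerivAt (potentialEnergy m h)
      (-∑ i, (innerSL ℝ (force m h X i)).comp (ContinuousLinearMap.proj i)) X := by
  have pair : ∀ p ∈ univ.filter (fun p : Fin m × Fin m => p.1 < p.2),
      HasFDerivAt (fun Y : Fin m → EuclideanSpace ℝ (Fin m) =>
          Real.log (‖Y p.1 - Y p.2‖ ^ 2) - h p.1 p.2 * ‖Y p.1 - Y p.2‖ ^ 2)
        (((2 * (1 / ‖X p.1 - X p.2‖ ^ 2 - h p.1 p.2)) • innerSL ℝ (X p.1 - X p.2)).comp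
          (ContinuousLinearMap.proj p.1 - ContinuousLinearMap.proj p.2)) X := fun p hp =>
    (hasFDerivAt_log_sq_norm_sub_mul_sq_norm (h p.1 p.2)
      (sub_ne_zero.2 (hX _ _ (mem_filter.1 hp).2.ne))).comp
      (f := fun Y : Fin m → EuclideanSpace ℝ (Fin m) => Y p.1 - Y p.2) X
      ((hasFDerivAt_apply p.1 X).sub (hasFDerivAt_apply p.2 X))
  refine ((HasFDerivAt.fun_sum pair).const_mul (-(1 / 2) : ℝ)).congr_fderiv ?_
  ext u
  simp only [smul_apply, _root_.sum_apply, neg_apply, ContinuousLinearMap.comp_apply, sub_apply,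
    innerSL_apply_apply, ContinuousLinearMap.proj_apply, smul_eq_mul]
  rw [sum_inner_force_s7 hsymm u, mul_sum, ← sum_neg_distrib]
  exact sum_congr rfl fun p _ => by ring

end

theorem force_is_neg_grad_potential_general (m : ℕ) (h : Matrix (Fin m) (Fin m) ℝ)
    (hsymm : ∀ i k, h i k = h k i)
    (X : Fin m → EuclideanSpace ℝ (Fin m)) (hX : ∀ i k : Fin m, i ≠ k → X i ≠ X k) :
    DifferentiableAt ℝ (potentialEnergy m h) X ∧
      ∀ i j : Fin m,
        fderiv ℝ (potentialEnergy m h) X (Pi.single i (EuclideanSpace.single j 1)) =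
          -(force m h X i j) := by
  have hE := hasFDerivAt_potentialEnergy hsymm hX
  refine ⟨hE.differentiableAt, fun i j => ?_⟩
  rw [hE.fderiv]
  simp [Pi.single_apply, apply_ite, EuclideanSpace.inner_single_right]

/-- The system is Hamiltonian: the potential energy is differentiable at every configuration
with pairwise distinct points, and the partial derivative of `E_p` with respect to the `j`-th
coordinate of the `i`-th point equals `−(F_i(X))_j`. -/
theorem force_is_neg_grad_potential (m : ℕ) (hm : 2 ≤ m) (h : Matrix (Fin m) (Fin m) ℝ)
    (hsymm : ∀ i k, h i k = h k i) (hdiag : ∀ i, h i i = 0)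
    (h01 : ∀ i k, h i k = 0 ∨ h i k = 1)
    (X : Fin m → EuclideanSpace ℝ (Fin m)) (hX : ∀ i k : Fin m, i ≠ k → X i ≠ X k) :
    DifferentiableAt ℝ (potentialEnergy m h) X ∧
      ∀ i j : Fin m,
        fderiv ℝ (potentialEnergy m h) X (Pi.single i (EuclideanSpace.single j 1)) =
          -(force m h X i j) :=
  force_is_neg_grad_potential_general m h hsymm X hX
end

section
/- Let π be a permutation of {1, …, m} with h_{π(i)π(k)} = h_{ik} for all i, k (an automorphism of the adjacency matrix). If t ↦ X(t) is a solution of the system on ℝ with initial conditions x_i(0) = e_i (the i-th standard basis vector of ℝ^m) and x_i′(0) = 0 for all i, then the map t ↦ Y(t) defined by y_i(t)(j) = x_{π(i)}(t)(π(j)) is also a solution of the system on ℝ with the same initial conditions y_i(0) = e_i and y_i′(0) = 0. -/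
section LinearIsometryDeriv

variable {𝕜 E F : Type*} [NontriviallyNormedField 𝕜] [NormedAddCommGroup E] [NormedSpace 𝕜 E]
  [NormedAddCommGroup F] [NormedSpace 𝕜 F]

lemma LinearIsometryEquiv.deriv_comp (L : E ≃ₗᵢ[𝕜] F) (f : 𝕜 → E) (t : 𝕜) :
    deriv (fun s => L (f s)) t = L (deriv f t) :=
  congrArg (· 1) (L.comp_fderiv (f := f) (x := t))

lemma LinearIsometryEquiv.hasDerivAt_comp (L : E ≃ₗᵢ[𝕜] F) {f : 𝕜 → E} {f' : E} {t : 𝕜}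
    (hf : HasDerivAt f f' t) : HasDerivAt (fun s => L (f s)) (L f') t :=
  L.hasFDerivAt.comp_hasDerivAt t hf

end LinearIsometryDeriv

/-- `permCoords π v j = v (π j)`. -/
noncomputable def permCoords {ι : Type*} [Fintype ι] (π : Equiv.Perm ι) :
    EuclideanSpace ℝ ι ≃ₗᵢ[ℝ] EuclideanSpace ℝ ι :=
  LinearIsometryEquiv.piLpCongrLeft 2 ℝ ℝ π.symm

lemma permCoords_single {ι : Type*} [Fintype ι] [DecidableEq ι] (π : Equiv.Perm ι) (i : ι) :
    permCoords π (EuclideanSpace.single i 1) = EuclideanSpace.single (π.symm i) 1 :=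
  EuclideanSpace.piLpCongrLeft_single π.symm i 1

section Relabel

variable {m : ℕ} {h : Matrix (Fin m) (Fin m) ℝ} {π : Equiv.Perm (Fin m)}

/-- The configuration `y_i(j) = x_{π i}(π j)`. -/
noncomputable def relabel (π : Equiv.Perm (Fin m)) (X : Fin m → EuclideanSpace ℝ (Fin m)) :
    Fin m → EuclideanSpace ℝ (Fin m) :=
  fun i => permCoords π (X (π i))

lemma relabel_single (π : Equiv.Perm (Fin m)) :
    relabel π (fun i => EuclideanSpace.single i (1 : ℝ)) = fun i => EuclideanSpace.single i 1 := by
  funext i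
  simp only [relabel, permCoords_single, Equiv.symm_apply_apply]

lemma force_relabel (hπ : ∀ i k, h (π i) (π k) = h i k) (X : Fin m → EuclideanSpace ℝ (Fin m))
    (i : Fin m) : force m h (relabel π X) i = permCoords π (force m h X (π i)) := by
  rw [force, force, map_sum]
  refine Finset.sum_equiv π (by simp) fun k _ => ?_
  simp only [relabel, ← map_sub, map_smul, LinearIsometryEquiv.norm_map, hπ]

lemma IsSolution.map_relabel {S : Set ℝ} (hπ : ∀ i k, h (π i) (π k) = h i k)
    {X : ℝ → Fin m → EuclideanSpace ℝ (Fin m)} (hX : IsSolution m h S X) :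
    IsSolution m h S (fun t => relabel π (X t)) := by
  obtain ⟨hdistinct, hdiff, hforce⟩ := hX
  refine ⟨fun t ht i k hik hEq => ?_, fun i t ht => ?_, fun i t ht => ?_⟩
  · exact hdistinct t ht (π i) (π k) (π.injective.ne hik) ((permCoords π).injective hEq)
  · exact ((permCoords π).hasDerivAt_comp (hdiff (π i) t ht).hasDerivAt).differentiableAt
  · have hvelocity : deriv (fun s => relabel π (X s) i) =
        fun s => permCoords π (deriv (fun s => X s (π i)) s) :=
      funext fun s => (permCoords π).deriv_comp _ s
    rw [hvelocity, force_relabel hπ]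
    exact (permCoords π).hasDerivAt_comp (hforce (π i) t ht)

end Relabel

theorem relabeled_solution_is_solution_general (m : ℕ)
    (h : Matrix (Fin m) (Fin m) ℝ)
    (π : Equiv.Perm (Fin m)) (hπ : ∀ i k, h (π i) (π k) = h i k)
    (X : ℝ → Fin m → EuclideanSpace ℝ (Fin m))
    (hX : IsSolution m h Set.univ X)
    (hX0 : ∀ i, X 0 i = EuclideanSpace.single i (1 : ℝ))
    (hX0' : ∀ i, deriv (fun t => X t i) 0 = 0) :
    IsSolution m h Set.univ
        (fun t i => (WithLp.toLp 2 (fun j => X t (π i) (π j)) : EuclideanSpace ℝ (Fin m))) ∧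
      (∀ i, (WithLp.toLp 2 (fun j => X 0 (π i) (π j)) : EuclideanSpace ℝ (Fin m)) =
        EuclideanSpace.single i (1 : ℝ)) ∧
      (∀ i, deriv (fun t => (WithLp.toLp 2 (fun j => X t (π i) (π j)) : EuclideanSpace ℝ (Fin m))) 0 = 0) := by
  refine ⟨hX.map_relabel hπ, fun i => ?_, fun i => ?_⟩
  · change relabel π (X 0) i = _
    rw [funext hX0, relabel_single]
  · change deriv (fun t => permCoords π (X t (π i))) 0 = 0
    rw [(permCoords π).deriv_comp, hX0', map_zero]

/-- If `π` is an automorphism of the adjacency matrix `h` and `X` is a solution of the system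
on `ℝ` with initial conditions `x_i(0) = e_i`, `x_i′(0) = 0`, then
`Y` defined by `y_i(t)(j) = x_{π(i)}(t)(π(j))` is also a solution of the system on `ℝ`
with the same initial conditions. -/
theorem relabeled_solution_is_solution (m : ℕ) (hm : 2 ≤ m)
    (h : Matrix (Fin m) (Fin m) ℝ)
    (hsymm : ∀ i k, h i k = h k i) (hdiag : ∀ i, h i i = 0)
    (h01 : ∀ i k, h i k = 0 ∨ h i k = 1)
    (π : Equiv.Perm (Fin m)) (hπ : ∀ i k, h (π i) (π k) = h i k)
    (X : ℝ → Fin m → EuclideanSpace ℝ (Fin m))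
    (hX : IsSolution m h Set.univ X)
    (hX0 : ∀ i, X 0 i = EuclideanSpace.single i (1 : ℝ))
    (hX0' : ∀ i, deriv (fun t => X t i) 0 = 0) :
    IsSolution m h Set.univ
        (fun t i => (WithLp.toLp 2 (fun j => X t (π i) (π j)) : EuclideanSpace ℝ (Fin m))) ∧
      (∀ i, (WithLp.toLp 2 (fun j => X 0 (π i) (π j)) : EuclideanSpace ℝ (Fin m)) =
        EuclideanSpace.single i (1 : ℝ)) ∧
      (∀ i, deriv (fun t => (WithLp.toLp 2 (fun j => X t (π i) (π j)) : EuclideanSpace ℝ (Fin m))) 0 = 0) :=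
  relabeled_solution_is_solution_general m h π hπ X hX hX0 hX0'
end

section
/- Let m ≥ 2 and let x_1, …, x_m be pairwise distinct points of ℝ^m. Then ∑_{r<s} log ‖x_r − x_s‖ ≤ (m(m−1)/2) · log( (2/√m) · √(∑_{s} ‖x_s‖²) ). -/
/-!
Squaring turns the left-hand side into half the sum of `log ‖x_r - x_s‖²` over the
`N = m(m-1)/2` pairs, which by AM–GM (concavity of `log`) is at most `N · log` of their mean.
The identity `∑_{r<s} ‖x_r - x_s‖² = m ∑_s ‖x_s‖² - ‖∑_s x_s‖²` bounds that mean by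
`2 ∑_s ‖x_s‖² / (m - 1) ≤ 4 ∑_s ‖x_s‖² / m` (as `m ≥ 2`), the square of the argument of the
logarithm on the right.
-/

open Finset Real

theorem sum_sum_eq_two_nsmul_sum_filter_lt {ι M : Type*} [Fintype ι] [LinearOrder ι]
    [AddCommMonoid M] (f : ι → ι → M) (hf : ∀ i j, f i j = f j i) (hdiag : ∀ i, f i i = 0) :
    ∑ i, ∑ j, f i j = 2 • ∑ p ∈ univ.filter (fun p : ι × ι => p.1 < p.2), f p.1 p.2 := by
  have hsplit : ∀ p : ι × ι, f p.1 p.2 =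
      (if p.1 < p.2 then f p.1 p.2 else 0) + (if p.2 < p.1 then f p.2 p.1 else 0) := by
    rintro ⟨i, j⟩
    rcases lt_trichotomy i j with h | rfl | h
    · simp [h, h.not_gt]
    · simp [hdiag]
    · simp [h, h.not_gt, hf i j]
  have hswap : ∑ p : ι × ι, (if p.2 < p.1 then f p.2 p.1 else 0) =
      ∑ p : ι × ι, (if p.1 < p.2 then f p.1 p.2 else 0) :=
    Fintype.sum_equiv (Equiv.prodComm ι ι) _ _ fun _ => rfl
  rw [← Fintype.sum_prod_type', Fintype.sum_congr _ _ hsplit, sum_add_distrib, hswap, two_nsmul,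
    sum_filter]

theorem sum_sum_norm_sub_sq {ι E : Type*} [Fintype ι] [NormedAddCommGroup E]
    [InnerProductSpace ℝ E] (x : ι → E) :
    ∑ i, ∑ j, ‖x i - x j‖ ^ 2 = 2 * Fintype.card ι * ∑ i, ‖x i‖ ^ 2 - 2 * ‖∑ i, x i‖ ^ 2 := by
  simp only [norm_sub_sq_real, sum_add_distrib, sum_sub_distrib, ← mul_sum, ← inner_sum,
    ← sum_inner, real_inner_self_eq_norm_sq, sum_const, card_univ, nsmul_eq_mul]
  ring

theorem sum_filter_lt_norm_sub_sq {ι E : Type*} [Fintype ι] [LinearOrder ι]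
    [NormedAddCommGroup E] [InnerProductSpace ℝ E] (x : ι → E) :
    ∑ p ∈ univ.filter (fun p : ι × ι => p.1 < p.2), ‖x p.1 - x p.2‖ ^ 2 =
      Fintype.card ι * ∑ i, ‖x i‖ ^ 2 - ‖∑ i, x i‖ ^ 2 := by
  have h := sum_sum_norm_sub_sq x
  rw [sum_sum_eq_two_nsmul_sum_filter_lt _ (fun i j => by rw [norm_sub_rev]) (by simp),
    nsmul_eq_mul] at h
  push_cast at h
  linarith

theorem sum_log_le_card_mul_log_div_card {ι : Type*} (s : Finset ι) (f : ι → ℝ)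
    (hf : ∀ i ∈ s, 0 < f i) :
    ∑ i ∈ s, log (f i) ≤ #s * log ((∑ i ∈ s, f i) / #s) := by
  rcases s.eq_empty_or_nonempty with rfl | hs
  · simp
  have hcard : (0 : ℝ) < #s := by exact_mod_cast hs.card_pos
  have hjensen := strictConcaveOn_log_Ioi.concaveOn.le_map_sum (t := s) (w := fun _ => (#s : ℝ)⁻¹)
    (p := f) (fun _ _ => by positivity) (by simp [hcard.ne']) hf
  simp only [smul_eq_mul, inv_mul_eq_div, ← sum_div] at hjensen
  rwa [div_le_iff₀' hcard] at hjensen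

theorem log_two_div_sqrt_mul_sqrt {a b : ℝ} (ha : 0 ≤ a) (hb : 0 ≤ b) :
    log (2 / √a * √b) = log (4 * b / a) / 2 := by
  rw [← log_sqrt (by positivity), sqrt_div' _ ha, sqrt_mul' 4 hb,
    show (4 : ℝ) = 2 ^ 2 by norm_num, sqrt_sq zero_le_two]
  ring_nf

theorem sum_filter_lt_norm_sub_sq_div_choose_two_le {ι E : Type*} [Fintype ι] [LinearOrder ι]
    [NormedAddCommGroup E] [InnerProductSpace ℝ E] (hι : 2 ≤ Fintype.card ι) (x : ι → E) :
    (∑ p ∈ univ.filter (fun p : ι × ι => p.1 < p.2), ‖x p.1 - x p.2‖ ^ 2) /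
        (Fintype.card ι).choose 2 ≤ 4 * (∑ i, ‖x i‖ ^ 2) / Fintype.card ι := by
  have hm : (2 : ℝ) ≤ Fintype.card ι := by exact_mod_cast hι
  have hS : 0 ≤ ∑ i, ‖x i‖ ^ 2 := by positivity
  rw [sum_filter_lt_norm_sub_sq, Nat.cast_choose_two, div_le_div_iff₀ (by nlinarith) (by linarith)]
  nlinarith [sq_nonneg ‖∑ i, x i‖, mul_nonneg hS (by linarith : (0 : ℝ) ≤ Fintype.card ι - 2)]

/-- For `m ≥ 2` pairwise distinct points of `ℝ^m`,
`∑_{r<s} log ‖x_r − x_s‖ ≤ (m(m−1)/2) · log((2/√m)·√(∑_s ‖x_s‖²))`. -/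
theorem sum_log_dist_le (m : ℕ) (hm : 2 ≤ m)
    (x : Fin m → EuclideanSpace ℝ (Fin m)) (hx : ∀ r s : Fin m, r ≠ s → x r ≠ x s) :
    ∑ p ∈ Finset.univ.filter (fun p : Fin m × Fin m => p.1 < p.2),
        Real.log ‖x p.1 - x p.2‖ ≤
      ((m : ℝ) * ((m : ℝ) - 1) / 2) *
        Real.log ((2 / Real.sqrt m) * Real.sqrt (∑ s, ‖x s‖ ^ 2)) := by
  set P := univ.filter (fun p : Fin m × Fin m => p.1 < p.2)
  have hcard : #P = m.choose 2 := by simpa using Fintype.card_product_filter_lt (α := Fin m)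
  have hpos : ∀ p ∈ P, 0 < ‖x p.1 - x p.2‖ ^ 2 := fun p hp =>
    pow_pos (norm_pos_iff.2 (sub_ne_zero.2 (hx _ _ (mem_filter.1 hp).2.ne))) 2
  have hP : P.Nonempty := ⟨(⟨0, by omega⟩, ⟨1, by omega⟩), by simp [P]⟩
  have hmean_pos : 0 < (∑ p ∈ P, ‖x p.1 - x p.2‖ ^ 2) / #P :=
    div_pos (sum_pos hpos hP) (by exact_mod_cast hP.card_pos)
  calc ∑ p ∈ P, log ‖x p.1 - x p.2‖ = (∑ p ∈ P, log (‖x p.1 - x p.2‖ ^ 2)) / 2 := by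
        simp only [log_pow, sum_div]; push_cast; ring_nf
    _ ≤ #P * log ((∑ p ∈ P, ‖x p.1 - x p.2‖ ^ 2) / #P) / 2 := by
        gcongr; exact sum_log_le_card_mul_log_div_card P _ hpos
    _ ≤ #P * log (4 * (∑ s, ‖x s‖ ^ 2) / m) / 2 := by
        gcongr _ * ?_ / 2
        refine log_le_log hmean_pos ?_
        simpa [hcard] using sum_filter_lt_norm_sub_sq_div_choose_two_le (by simpa using hm) x
    _ = _ := by
        rw [hcard, Nat.cast_choose_two, log_two_div_sqrt_mul_sqrt (by positivity) (by positivity)]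
        ring
end

section
/- If a and b are integers with a ≥ 0 and b > 0, then (a + 2b)! / (a! · b! · b!) is an even integer. -/
/-- If `a ≥ 0` and `b > 0` are integers, then `(a + 2b)! / (a! · b! · b!)` is an even
integer, i.e. `2 · (a! · b! · b!)` divides `(a + 2b)!`. -/
theorem even_multinomial (a b : ℕ) (hb : 0 < b) :
    2 * (Nat.factorial a * Nat.factorial b * Nat.factorial b) ∣
      Nat.factorial (a + 2 * b) := by
  obtain ⟨c, hc⟩ := Nat.two_dvd_centralBinom_of_one_le hb
  have h2 : (2 * b).choose b * Nat.factorial b * Nat.factorial (2 * b - b)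
      = Nat.factorial (2 * b) := Nat.choose_mul_factorial_mul_factorial (by omega)
  have h1 : (a + 2 * b).choose (2 * b) * Nat.factorial (2 * b)
      * Nat.factorial (a + 2 * b - 2 * b) = Nat.factorial (a + 2 * b) :=
    Nat.choose_mul_factorial_mul_factorial (by omega)
  rw [show a + 2 * b - 2 * b = a by omega] at h1
  rw [show 2 * b - b = b by omega] at h2
  rw [← h1, ← h2, ← Nat.centralBinom_eq_two_mul_choose, hc]
  ring_nf
  exact ⟨c * (a + 2 * b).choose (2 * b), by ring⟩
end

section
/- Define rational numbers a_{ij}^s and r_{ik}^s (1 ≤ i, j, k ≤ m, s ≥ 0) by the double recurrence: a_{ij}^0 = δ_{ij}, r_{ik}^0 = (1 − δ_{ik})/2, r_{ii}^s = 0 for all s, r_{ik}^s = −(1/2) ∑_{c=1}^{s} r_{ik}^{s−c} ∑_{l=1}^{m} ∑_{d=0}^{c} (a_{il}^d − a_{kl}^d)(a_{il}^{c−d} − a_{kl}^{c−d}) for i ≠ k and s ≥ 1, and a_{ij}^{s+1} = (1/(2(s+1)(2s+1))) · ( ∑_{k=1}^{m} ∑_{p=0}^{s} (a_{ij}^p −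 a_{kj}^p) r_{ik}^{s−p} − ∑_{k=1}^{m} h_{ik}(a_{ij}^s − a_{kj}^s) ). Then for every s ≥ 0 and all i, j, k, the numbers 2^s (2s)! · a_{ij}^s and 2^{s+1} (2s)! · r_{ik}^s are integers. -/
/-!
Integrality is read as membership in `⊥ : Subring ℚ`, the image of `ℤ`. Since
`scale (p + q) = C(2p + 2q, 2p) * scale p * scale q`, convolutions of scaled sequences stay
integral, and `scale (s + 1) = 4 (s + 1) (2 s + 1) * scale s` absorbs the factor in front of the
recurrence for `a`, leaving the factor `2` needed against the half-integral scaled `r`. In the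
recurrence for `r` the missing `1 / 2` is supplied by parity: `∑ d, C(2c, 2d) x_d x_(c-d)` is
invariant under `d ↦ c - d`, and its middle term carries the even central binomial `C(4e, 2e)`.
-/

open Finset

def scale (s : ℕ) : ℚ := 2 ^ s * (2 * s).factorial

lemma scale_zero : scale 0 = 1 := by simp [scale]

lemma scale_succ (s : ℕ) : scale (s + 1) = 4 * (s + 1) * (2 * s + 1) * scale s := by
  rw [scale, scale, show 2 * (s + 1) = 2 * s + 1 + 1 by ring, Nat.factorial_succ,
    Nat.factorial_succ]
  push_cast
  ring

lemma scale_add (p q : ℕ) :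
    scale (p + q) = (2 * (p + q)).choose (2 * p) * scale p * scale q := by
  have hfact := Nat.choose_mul_factorial_mul_factorial (show 2 * p ≤ 2 * (p + q) by omega)
  rw [show 2 * (p + q) - 2 * p = 2 * q by omega] at hfact
  rw [scale, scale, scale, ← hfact]
  push_cast
  ring

lemma scale_mul_mul_mem {p q s : ℕ} (hpq : p + q = s) {x y : ℚ}
    (hx : scale p * x ∈ (⊥ : Subring ℚ)) (hy : scale q * y ∈ (⊥ : Subring ℚ)) :
    scale s * (x * y) ∈ (⊥ : Subring ℚ) := by
  rw [← hpq, scale_add, show ∀ c : ℚ,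
    c * scale p * scale q * (x * y) = c * (scale p * x) * (scale q * y) from fun c => by ring]
  exact mul_mem (mul_mem (natCast_mem _ _) hx) hy

lemma two_dvd_sum_range_of_symm {c : ℕ} {f : ℕ → ℤ} (hsymm : ∀ d ≤ c, f (c - d) = f d)
    (hmid : ∀ d, c = 2 * d → 2 ∣ f d) : 2 ∣ ∑ d ∈ range (c + 1), f d := by
  refine (ZMod.intCast_zmod_eq_zero_iff_dvd _ 2).1 ?_
  rw [Int.cast_sum]
  refine sum_involution (fun d _ => c - d) (fun d hd => ?_) (fun d hd hfd hfix => hfd ?_)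
    (fun d _ => by simp) (fun d hd => by simp at hd; omega)
  · rw [hsymm d (by simp at hd; omega)]
    exact CharTwo.add_self_eq_zero _
  · exact (ZMod.intCast_zmod_eq_zero_iff_dvd _ 2).2 (hmid d (by omega))

lemma two_dvd_sum_choose_mul {c : ℕ} (hc : 1 ≤ c) (z : ℕ → ℤ) :
    2 ∣ ∑ d ∈ range (c + 1), ((2 * c).choose (2 * d) : ℤ) * (z d * z (c - d)) := by
  refine two_dvd_sum_range_of_symm (fun d hd => ?_) (fun d hcd => ?_)
  · rw [show 2 * (c - d) = 2 * c - 2 * d by omega, Nat.choose_symm (by omega),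
      Nat.sub_sub_self hd, mul_comm (z (c - d))]
  · rw [hcd, ← Nat.centralBinom_eq_two_mul_choose]
    exact dvd_mul_of_dvd_left (Int.natCast_dvd_natCast.2 (Nat.two_dvd_centralBinom_of_one_le
      (by omega))) _

lemma scale_mul_sum_range_mul_sub_div_two_mem {c : ℕ} (hc : 1 ≤ c) {x : ℕ → ℚ}
    (hx : ∀ d ≤ c, scale d * x d ∈ (⊥ : Subring ℚ)) :
    scale c * (∑ d ∈ range (c + 1), x d * x (c - d)) / 2 ∈ (⊥ : Subring ℚ) := by
  have hz : ∀ d, ∃ n : ℤ, d ≤ c → (n : ℚ) = scale d * x d := fun d =>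
    if hd : d ≤ c then (Subring.mem_bot.1 (hx d hd)).imp fun _ e _ => e
    else ⟨0, fun h => absurd h hd⟩
  choose z hz using hz
  obtain ⟨w, hw⟩ := two_dvd_sum_choose_mul hc z
  have hsum : scale c * ∑ d ∈ range (c + 1), x d * x (c - d) =
      ((∑ d ∈ range (c + 1), ((2 * c).choose (2 * d) : ℤ) * (z d * z (c - d)) : ℤ) : ℚ) :=
    by
    push_cast
    rw [mul_sum]
    refine sum_congr rfl fun d hd => ?_
    have hdc : d ≤ c := by simp at hd; omega
    conv_lhs => rw [← Nat.add_sub_cancel' hdc, scale_add]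
    rw [Nat.add_sub_cancel' hdc, hz d hdc, hz (c - d) (by omega)]
    ring
  rw [hsum, hw]
  exact Subring.mem_bot.2 ⟨w, by push_cast; ring⟩

section Recurrence

variable {m : ℕ} {h : Matrix (Fin m) (Fin m) ℚ} {a r : ℕ → Fin m → Fin m → ℚ}

lemma scale_succ_mul_a_succ_mem (hh : ∀ i k, h i k ∈ (⊥ : Subring ℚ))
    (harec : ∀ s : ℕ, ∀ i j : Fin m,
      a (s + 1) i j = (1 / (2 * ((s : ℚ) + 1) * (2 * (s : ℚ) + 1))) *
        ((∑ k, ∑ p ∈ Finset.range (s + 1), (a p i j - a p k j) * r (s - p) i k) -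
          ∑ k, h i k * (a s i j - a s k j)))
    {n : ℕ} (hA : ∀ p ≤ n, ∀ i j, scale p * a p i j ∈ (⊥ : Subring ℚ))
    (hR : ∀ p ≤ n, ∀ i k, 2 * scale p * r p i k ∈ (⊥ : Subring ℚ)) (i j : Fin m) :
    scale (n + 1) * a (n + 1) i j ∈ (⊥ : Subring ℚ) := by
  have hdiff : ∀ p ≤ n, ∀ k, scale p * (a p i j - a p k j) ∈ (⊥ : Subring ℚ) :=
    fun p hp k => by
      rw [mul_sub]
      exact sub_mem (hA p hp i j) (hA p hp k j)
  have hexpand : scale (n + 1) * a (n + 1) i j =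
      (∑ k, ∑ p ∈ range (n + 1), scale n * ((a p i j - a p k j) * (2 * r (n - p) i k))) -
        ∑ k, h i k * (2 * (scale n * (a n i j - a n k j))) := by
    rw [harec, scale_succ]
    calc _ = 2 * scale n * ((∑ k, ∑ p ∈ range (n + 1), (a p i j - a p k j) * r (n - p) i k) -
          ∑ k, h i k * (a n i j - a n k j)) := by field_simp; ring
      _ = _ := by
        simp only [mul_sub, mul_sum]
        congr 1 <;> refine sum_congr rfl fun k _ => ?_
        · exact sum_congr rfl fun p _ => by ring
        · ring
  rw [hexpand]
  refine sub_mem (sum_mem fun k _ => sum_mem fun p hp => ?_) (sum_mem fun k _ => ?_)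
  · have hpn : p ≤ n := by simp at hp; omega
    refine scale_mul_mul_mem (Nat.add_sub_cancel' hpn) (hdiff p hpn k) ?_
    rw [mul_left_comm, ← mul_assoc]
    exact hR (n - p) (by omega) i k
  · exact mul_mem (hh i k) (mul_mem (intCast_mem _ 2) (hdiff n le_rfl k))

lemma two_mul_scale_succ_mul_r_succ_mem (hrdiag : ∀ s i, r s i i = 0)
    (hrrec : ∀ s : ℕ, ∀ i k : Fin m, i ≠ k →
      r (s + 1) i k = -(1 / 2) * ∑ c ∈ Finset.Icc 1 (s + 1), r (s + 1 - c) i k *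
        ∑ l, ∑ d ∈ Finset.range (c + 1),
          (a d i l - a d k l) * (a (c - d) i l - a (c - d) k l))
    {n : ℕ} (hA : ∀ p ≤ n + 1, ∀ i j, scale p * a p i j ∈ (⊥ : Subring ℚ))
    (hR : ∀ p ≤ n, ∀ i k, 2 * scale p * r p i k ∈ (⊥ : Subring ℚ)) (i k : Fin m) :
    2 * scale (n + 1) * r (n + 1) i k ∈ (⊥ : Subring ℚ) := by
  rcases eq_or_ne i k with rfl | hik
  · simp [hrdiag]
  have hQ : ∀ c ∈ Icc 1 (n + 1), scale c * ((∑ l, ∑ d ∈ range (c + 1),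
      (a d i l - a d k l) * (a (c - d) i l - a (c - d) k l)) / 2) ∈ (⊥ : Subring ℚ) :=
    fun c hc => by
      obtain ⟨hc1, hcn⟩ := mem_Icc.1 hc
      rw [← mul_div_assoc, mul_sum, sum_div]
      refine sum_mem fun l _ => scale_mul_sum_range_mul_sub_div_two_mem hc1 fun d hd => ?_
      rw [mul_sub]
      exact sub_mem (hA d (by omega) i l) (hA d (by omega) k l)
  rw [hrrec n i k hik,
    show ∀ x y : ℚ, 2 * x * (-(1 / 2) * y) = -(x * y) from fun x y => by ring, mul_sum]
  refine neg_mem (sum_mem fun c hc => ?_)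
  obtain ⟨hc1, hcn⟩ := mem_Icc.1 hc
  have hr : scale (n + 1 - c) * (2 * r (n + 1 - c) i k) ∈ (⊥ : Subring ℚ) := by
    rw [mul_left_comm, ← mul_assoc]
    exact hR _ (by omega) i k
  convert scale_mul_mul_mem (Nat.sub_add_cancel hcn) hr (hQ c hc) using 2
  ring

end Recurrence

theorem recurrence_denominator_bound_general (m : ℕ)
    (h : Matrix (Fin m) (Fin m) ℚ)
    (h01 : ∀ i k, h i k = 0 ∨ h i k = 1)
    (a r : ℕ → Fin m → Fin m → ℚ)
    (ha0 : ∀ i j, a 0 i j = if i = j then 1 else 0)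
    (hr0 : ∀ i k, r 0 i k = if i = k then 0 else 1 / 2)
    (hrdiag : ∀ s i, r s i i = 0)
    (hrrec : ∀ s : ℕ, ∀ i k : Fin m, i ≠ k →
      r (s + 1) i k = -(1 / 2) * ∑ c ∈ Finset.Icc 1 (s + 1), r (s + 1 - c) i k *
        ∑ l, ∑ d ∈ Finset.range (c + 1),
          (a d i l - a d k l) * (a (c - d) i l - a (c - d) k l))
    (harec : ∀ s : ℕ, ∀ i j : Fin m,
      a (s + 1) i j = (1 / (2 * ((s : ℚ) + 1) * (2 * (s : ℚ) + 1))) *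
        ((∑ k, ∑ p ∈ Finset.range (s + 1), (a p i j - a p k j) * r (s - p) i k) -
          ∑ k, h i k * (a s i j - a s k j))) :
    ∀ s : ℕ, ∀ i j k : Fin m,
      (∃ z : ℤ, ((2 : ℚ) ^ s * Nat.factorial (2 * s)) * a s i j = z) ∧
      (∃ z : ℤ, ((2 : ℚ) ^ (s + 1) * Nat.factorial (2 * s)) * r s i k = z) := by
  have hh : ∀ i k, h i k ∈ (⊥ : Subring ℚ) := fun i k => by
    rcases h01 i k with e | e <;> rw [e]
    exacts [zero_mem _, one_mem _]
  have hscaled : ∀ n, (∀ p ≤ n, ∀ i j, scale p * a p i j ∈ (⊥ : Subring ℚ)) ∧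
      (∀ p ≤ n, ∀ i k, 2 * scale p * r p i k ∈ (⊥ : Subring ℚ)) := by
    intro n
    induction n with
    | zero =>
      refine ⟨fun p hp i j => ?_, fun p hp i k => ?_⟩ <;> obtain rfl := Nat.le_zero.1 hp
      · rw [scale_zero, ha0]
        split_ifs <;> simp
      · rw [scale_zero, hr0]
        split_ifs <;> simp
    | succ n ih =>
      have hA : ∀ p ≤ n + 1, ∀ i j, scale p * a p i j ∈ (⊥ : Subring ℚ) := fun p hp =>
        (Nat.le_succ_iff.1 hp).elim (ih.1 p)
          fun e => e ▸ scale_succ_mul_a_succ_mem hh harec ih.1 ih.2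
      exact ⟨hA, fun p hp => (Nat.le_succ_iff.1 hp).elim (ih.2 p)
        fun e => e ▸ two_mul_scale_succ_mul_r_succ_mem hrdiag hrrec hA ih.2⟩
  intro s i j k
  obtain ⟨za, hza⟩ := Subring.mem_bot.1 ((hscaled s).1 s le_rfl i j)
  obtain ⟨zr, hzr⟩ := Subring.mem_bot.1 ((hscaled s).2 s le_rfl i k)
  refine ⟨⟨za, hza.symm⟩, ⟨zr, ?_⟩⟩
  rw [hzr, scale, pow_succ]
  ring

/-- Let `a_{ij}^s`, `r_{ik}^s` be the rational numbers defined by the double recurrence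
(24) of the paper, for an `m×m` symmetric 0,1-adjacency matrix `h` with zero diagonal.
Then `2^s (2s)! · a_{ij}^s` and `2^{s+1} (2s)! · r_{ik}^s` are integers for all `s, i, j, k`. -/
theorem recurrence_denominator_bound (m : ℕ) (hm : 2 ≤ m)
    (h : Matrix (Fin m) (Fin m) ℚ)
    (hsymm : ∀ i k, h i k = h k i) (hdiag : ∀ i, h i i = 0)
    (h01 : ∀ i k, h i k = 0 ∨ h i k = 1)
    (a r : ℕ → Fin m → Fin m → ℚ)
    (ha0 : ∀ i j, a 0 i j = if i = j then 1 else 0)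
    (hr0 : ∀ i k, r 0 i k = if i = k then 0 else 1 / 2)
    (hrdiag : ∀ s i, r s i i = 0)
    (hrrec : ∀ s : ℕ, ∀ i k : Fin m, i ≠ k →
      r (s + 1) i k = -(1 / 2) * ∑ c ∈ Finset.Icc 1 (s + 1), r (s + 1 - c) i k *
        ∑ l, ∑ d ∈ Finset.range (c + 1),
          (a d i l - a d k l) * (a (c - d) i l - a (c - d) k l))
    (harec : ∀ s : ℕ, ∀ i j : Fin m,
      a (s + 1) i j = (1 / (2 * ((s : ℚ) + 1) * (2 * (s : ℚ) + 1))) *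
        ((∑ k, ∑ p ∈ Finset.range (s + 1), (a p i j - a p k j) * r (s - p) i k) -
          ∑ k, h i k * (a s i j - a s k j))) :
    ∀ s : ℕ, ∀ i j k : Fin m,
      (∃ z : ℤ, ((2 : ℚ) ^ s * Nat.factorial (2 * s)) * a s i j = z) ∧
      (∃ z : ℤ, ((2 : ℚ) ^ (s + 1) * Nat.factorial (2 * s)) * r s i k = z) :=
  recurrence_denominator_bound_general m h h01 a r ha0 hr0 hrdiag hrrec harec
end
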